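/- arXiv:2501.10176 — 5 statements merged into one kernel-verified Lean document; each statement's English description precedes it below -/
import Mathlib

section
/- Let H1 and H2 be n×n Hermitian complex matrices and let ũ : ℝ → ℂ^n be differentiable with dũ/dt = (H1 + i H2) ũ. Then the function v(t, p) := e^{−p} ũ(t) satisfies the warped-phase transport equation ∂t v(t,p) = −H1 ∂p v(t,p) + i H2 v(t,p) for all t ∈ ℝ and all p ∈ ℝ. -/
/-- **Warped phase transformation.**
If `H1, H2` are Hermitian and `ũ` solves `dũ/dt = (H1 + i H2) ũ`, then
`v(t,p) := e^{-p} ũ(t)` satisfies `∂ₜ v = -H1 ∂ₚ v + i H2 v` for all `t, p ∈ ℝ`. -/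
theorem stmt_1 {n : ℕ} (H1 H2 : Matrix (Fin n) (Fin n) ℂ)
    (hH1 : H1.IsHermitian) (hH2 : H2.IsHermitian)
    (ut : ℝ → (Fin n → ℂ))
    (hode : ∀ t, HasDerivAt ut ((H1 + Complex.I • H2).mulVec (ut t)) t)
    (v : ℝ → ℝ → (Fin n → ℂ))
    (hv : ∀ t p, v t p = Real.exp (-p) • ut t) :
    ∀ t p : ℝ, ∃ vp : Fin n → ℂ,
      HasDerivAt (fun q => v t q) vp p ∧
      HasDerivAt (fun s => v s p)
        (-(H1.mulVec vp) + Complex.I • H2.mulVec (v t p)) t := by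
  intro t p
  refine ⟨(-Real.exp (-p)) • ut t, ?_, ?_⟩
  · have h1 : HasDerivAt (fun q : ℝ => Real.exp (-q)) (-Real.exp (-p)) p := by
      simpa [Function.comp_def] using ((Real.hasDerivAt_exp (-p)).comp p ((hasDerivAt_id p).neg))
    have := h1.smul_const (ut t)
    simpa [hv] using this
  · have h2 : HasDerivAt (fun s => Real.exp (-p) • ut s)
        (Real.exp (-p) • ((H1 + Complex.I • H2).mulVec (ut t))) t :=
      (hode t).const_smul (Real.exp (-p))
    have heq : Real.exp (-p) • ((H1 + Complex.I • H2).mulVec (ut t)) =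
        -(H1.mulVec ((-Real.exp (-p)) • ut t)) + Complex.I • H2.mulVec (v t p) := by
      rw [hv]
      funext i
      simp [Matrix.add_mulVec, Matrix.mulVec_neg, Matrix.mulVec_smul,
        Matrix.smul_mulVec, smul_add, Complex.real_smul]
      ring
    rw [← heq] at *
    simpa [hv] using h2
end

section
/- Let H1, H2 be n×n Hermitian matrices and let v : [0, T] × ℝ → ℂ^n be continuously differentiable and satisfy the warped-phase transport equation ∂t v = −H1 ∂p v + i H2 v on [0, T] × ℝ. Assume there is a square-integrable function g : ℝ → [0, ∞) such that ‖v(t,p)‖ ≤ g(p), ‖∂t v(t,p)‖ ≤ g(p), and ‖∂p v(t,p)‖ ≤ g(p) for all (t,p) ∈ [0,T] × ℝ. Then the quantity ∫_ℝ ‖v(t, p)‖² dp is independent of t ∈ [0, T]. -/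
open MeasureTheory

section Aux
open Set Filter

/-- An integrable real function that converges at `+∞` must converge to `0`. -/
lemma limit_zero_of_integrable_atTop {f : ℝ → ℝ} (hf : Integrable f) {L : ℝ}
    (h : Tendsto f atTop (nhds L)) : L = 0 := by
  by_contra hL
  have hev : ∀ᶠ x in atTop, |L| / 2 ≤ |f x| := by
    filter_upwards [h.eventually (eventually_abs_sub_lt L (by positivity : (0:ℝ) < |L|/2))]
      with x hx
    have h1 := abs_sub_abs_le_abs_sub L (f x)
    rw [abs_sub_comm] at hx
    linarith
  obtain ⟨a, ha⟩ := hev.exists_forall_of_atTop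
  have hconst : IntegrableOn (fun _ : ℝ => |L| / 2) (Ioi a) := by
    refine Integrable.mono (hf.integrableOn (s := Ioi a)) aestronglyMeasurable_const ?_
    refine (ae_restrict_iff' measurableSet_Ioi).2 (Filter.Eventually.of_forall fun x hx => ?_)
    have := ha x hx.le
    rw [Real.norm_eq_abs, Real.norm_eq_abs, abs_of_nonneg (by positivity : (0:ℝ) ≤ |L|/2)]
    exact this
  rw [IntegrableOn, integrable_const_iff] at hconst
  rcases hconst with h0 | hfin
  · exact hL (by simpa using abs_eq_zero.mp (by linarith [abs_nonneg L, h0] : |L| = 0))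
  · simp [isFiniteMeasure_iff, Measure.restrict_apply_univ, Real.volume_Ioi] at hfin

lemma limit_zero_of_integrable_atBot {f : ℝ → ℝ} (hf : Integrable f) {L : ℝ}
    (h : Tendsto f atBot (nhds L)) : L = 0 := by
  have hcomp : Tendsto (fun x : ℝ => f (-x)) atTop (nhds L) :=
    h.comp tendsto_neg_atTop_atBot
  have hint : Integrable (fun x : ℝ => f (-x)) := by
    simpa using hf.comp_neg
  exact limit_zero_of_integrable_atTop hint hcomp

/-- If `f` and its derivative `f'` are both integrable on `ℝ`, then `∫ f' = 0`. -/
lemma integral_deriv_eq_zero_of_integrable {f f' : ℝ → ℝ}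
    (hd : ∀ x, HasDerivAt f (f' x) x) (hf : Integrable f) (hf' : Integrable f') :
    (∫ x : ℝ, f' x) = 0 := by
  have hFTC : ∀ x : ℝ, f x = f 0 + ∫ s in (0:ℝ)..x, f' s := by
    intro x
    have := intervalIntegral.integral_eq_sub_of_hasDerivAt
      (f := f) (f' := f') (a := 0) (b := x) (fun s _ => hd s)
      (hf'.intervalIntegrable :)
    linarith [this]
  have htop : Tendsto f atTop (nhds (f 0 + ∫ s in Ioi (0:ℝ), f' s)) := by
    have := MeasureTheory.intervalIntegral_tendsto_integral_Ioi (μ := volume) (f := f')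
      (b := id) 0 hf'.integrableOn tendsto_id
    have h2 : Tendsto (fun x : ℝ => f 0 + ∫ s in (0:ℝ)..x, f' s) atTop
        (nhds (f 0 + ∫ s in Ioi (0:ℝ), f' s)) := tendsto_const_nhds.add this
    exact h2.congr fun x => (hFTC x).symm
  have hbot : Tendsto f atBot (nhds (f 0 - ∫ s in Iic (0:ℝ), f' s)) := by
    have := MeasureTheory.intervalIntegral_tendsto_integral_Iic (μ := volume) (f := f')
      (a := id) 0 hf'.integrableOn tendsto_id
    have h2 : Tendsto (fun x : ℝ => f 0 - ∫ s in x..(0:ℝ), f' s) atBot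
        (nhds (f 0 - ∫ s in Iic (0:ℝ), f' s)) := tendsto_const_nhds.sub this
    refine h2.congr fun x => ?_
    rw [hFTC x, intervalIntegral.integral_symm]
    ring
  have h1 : f 0 + ∫ s in Ioi (0:ℝ), f' s = 0 := limit_zero_of_integrable_atTop hf htop
  have h2 : f 0 - ∫ s in Iic (0:ℝ), f' s = 0 := limit_zero_of_integrable_atBot hf hbot
  rw [← intervalIntegral.integral_Iic_add_Ioi (b := (0:ℝ)) hf'.integrableOn hf'.integrableOn]
  linarith

end Aux

/-- **L²-conservation of the warped-phase dynamics.**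
If `v` is a C¹ solution of `∂ₜ v = -H1 ∂ₚ v + i H2 v` on `[0,T] × ℝ` (with `H1, H2`
Hermitian), and `v`, `∂ₜ v`, `∂ₚ v` are dominated by a square-integrable function `g`,
then `∫_ℝ ‖v(t,p)‖² dp` is independent of `t ∈ [0,T]`. -/
theorem stmt_4 {n : ℕ} (T : ℝ) (hT : 0 < T)
    (H1 H2 : Matrix (Fin n) (Fin n) ℂ)
    (hH1 : H1.IsHermitian) (hH2 : H2.IsHermitian)
    (v vt vp : ℝ → ℝ → EuclideanSpace ℂ (Fin n))
    (hcv : Continuous (Function.uncurry v))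
    (hcvt : Continuous (Function.uncurry vt))
    (hcvp : Continuous (Function.uncurry vp))
    (hdt : ∀ t ∈ Set.Icc (0 : ℝ) T, ∀ p : ℝ, HasDerivAt (fun s => v s p) (vt t p) t)
    (hdp : ∀ t ∈ Set.Icc (0 : ℝ) T, ∀ p : ℝ, HasDerivAt (fun q => v t q) (vp t p) p)
    (hpde : ∀ t ∈ Set.Icc (0 : ℝ) T, ∀ p : ℝ,
      vt t p = -(Matrix.toEuclideanLin H1 (vp t p))
        + Complex.I • Matrix.toEuclideanLin H2 (v t p))
    (g : ℝ → ℝ) (hg0 : ∀ p, 0 ≤ g p)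
    (hgL2 : Integrable (fun p => g p ^ 2))
    (hbd : ∀ t ∈ Set.Icc (0 : ℝ) T, ∀ p : ℝ,
      ‖v t p‖ ≤ g p ∧ ‖vt t p‖ ≤ g p ∧ ‖vp t p‖ ≤ g p) :
    ∀ t ∈ Set.Icc (0 : ℝ) T, (∫ p : ℝ, ‖v t p‖ ^ 2) = ∫ p : ℝ, ‖v 0 p‖ ^ 2 := by
  have hsym1 : (Matrix.toEuclideanLin H1).IsSymmetric :=
    Matrix.isHermitian_iff_isSymmetric.mp hH1
  have hsym2 : (Matrix.toEuclideanLin H2).IsSymmetric :=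
    Matrix.isHermitian_iff_isSymmetric.mp hH2
  set T1 := Matrix.toEuclideanLin H1 with hT1def
  set T2 := Matrix.toEuclideanLin H2 with hT2def
  set L1 := LinearMap.toContinuousLinearMap T1 with hL1def
  have hL1 : ∀ x, L1 x = T1 x := fun x => rfl
  set C1 : ℝ := ‖L1‖ with hC1def
  have hC1pos : 0 ≤ C1 := norm_nonneg _
  have hC1 : ∀ x, ‖T1 x‖ ≤ C1 * ‖x‖ := fun x => by
    rw [← hL1]; exact L1.le_opNorm x
  have hT1cont : Continuous (⇑T1) := by
    have := L1.continuous
    simpa [hL1def] using this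
  -- continuity of slices
  have hcv1 : ∀ t : ℝ, Continuous (fun p => v t p) := fun t =>
    hcv.comp (Continuous.prodMk_right t)
  have hcvt1 : ∀ t : ℝ, Continuous (fun p => vt t p) := fun t =>
    hcvt.comp (Continuous.prodMk_right t)
  have hcvp1 : ∀ t : ℝ, Continuous (fun p => vp t p) := fun t =>
    hcvp.comp (Continuous.prodMk_right t)
  -- generic integrability from bounds
  have int_of_bound : ∀ (h : ℝ → ℝ) (c : ℝ), Continuous h →
      (∀ p, |h p| ≤ c * g p ^ 2) → Integrable h := by
    intro h c hc hb
    refine (hgL2.const_mul c).mono' hc.aestronglyMeasurable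
      (Filter.Eventually.of_forall fun p => ?_)
    simpa [Real.norm_eq_abs] using hb p
  -- spatial vanishing
  have hspace : ∀ s ∈ Set.Icc (0:ℝ) T,
      (∫ p : ℝ, (inner ℂ (v s p) (vt s p) : ℂ).re) = 0 := by
    intro s hs
    set f : ℝ → ℝ := fun p => (inner ℂ (v s p) (T1 (v s p)) : ℂ).re with hfdef
    set f' : ℝ → ℝ := fun p => 2 * (inner ℂ (v s p) (T1 (vp s p)) : ℂ).re with hf'def
    have hd : ∀ p, HasDerivAt f (f' p) p := by
      intro p
      have h1 : HasDerivAt (fun q => v s q) (vp s p) p := hdp s hs p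
      have h2 : HasDerivAt (fun q => T1 (v s q)) (T1 (vp s p)) p := by
        have := (L1.restrictScalars ℝ).hasFDerivAt.comp_hasDerivAt p h1
        exact this
      have h3 := HasDerivAt.inner ℂ h1 h2
      have h4 := Complex.reCLM.hasFDerivAt.comp_hasDerivAt p h3
      have hre : ((inner ℂ (v s p) (T1 (vp s p)) : ℂ)
          + (inner ℂ (vp s p) (T1 (v s p)) : ℂ)).re = f' p := by
        have hconj : (inner ℂ (vp s p) (T1 (v s p)) : ℂ)
            = starRingEnd ℂ (inner ℂ (v s p) (T1 (vp s p)) : ℂ) := by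
          rw [inner_conj_symm]
          exact (hsym1 (vp s p) (v s p)).symm
        rw [Complex.add_re, hconj, Complex.conj_re, hf'def]
        ring
      have hfun : ⇑Complex.reCLM ∘ (fun q => (inner ℂ (v s q) (T1 (v s q)) : ℂ)) = f := by
        funext q; simp [hfdef]
      rw [hfun] at h4
      rwa [show Complex.reCLM ((inner ℂ (v s p) (T1 (vp s p)) : ℂ)
          + (inner ℂ (vp s p) (T1 (v s p)) : ℂ)) = f' p from by
        rw [Complex.reCLM_apply]; exact hre] at h4
    have hfcont : Continuous f :=
      Complex.continuous_re.comp ((hcv1 s).inner (hT1cont.comp (hcv1 s)))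
    have hf'cont : Continuous f' :=
      continuous_const.mul (Complex.continuous_re.comp ((hcv1 s).inner (hT1cont.comp (hcvp1 s))))
    have hfint : Integrable f := by
      refine int_of_bound f C1 hfcont fun p => ?_
      have h1 : |f p| ≤ ‖(inner ℂ (v s p) (T1 (v s p)) : ℂ)‖ := by
        exact Complex.abs_re_le_norm _
      have h2 := norm_inner_le_norm (𝕜 := ℂ) (v s p) (T1 (v s p))
      have h3 := hC1 (v s p)
      have h4 := (hbd s hs p).1
      calc |f p| ≤ ‖v s p‖ * ‖T1 (v s p)‖ := h1.trans h2
        _ ≤ ‖v s p‖ * (C1 * ‖v s p‖) := mul_le_mul_of_nonneg_left h3 (norm_nonneg _)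
        _ = C1 * ‖v s p‖ ^ 2 := by ring
        _ ≤ C1 * g p ^ 2 :=
            mul_le_mul_of_nonneg_left (pow_le_pow_left₀ (norm_nonneg _) h4 2) hC1pos
    have hf'int : Integrable f' := by
      refine int_of_bound f' (2 * C1) hf'cont fun p => ?_
      have h1 : |f' p| ≤ 2 * ‖(inner ℂ (v s p) (T1 (vp s p)) : ℂ)‖ := by
        have := Complex.abs_re_le_norm (inner ℂ (v s p) (T1 (vp s p)) : ℂ)
        rw [hf'def, abs_mul, abs_two]
        nlinarith [this]
      have h2 := norm_inner_le_norm (𝕜 := ℂ) (v s p) (T1 (vp s p))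
      have h3 := hC1 (vp s p)
      have h4 := (hbd s hs p).1
      have h5 := (hbd s hs p).2.2
      calc |f' p| ≤ 2 * ‖(inner ℂ (v s p) (T1 (vp s p)) : ℂ)‖ := h1
        _ ≤ 2 * (‖v s p‖ * ‖T1 (vp s p)‖) := by linarith
        _ ≤ 2 * (g p * (C1 * g p)) := by
            have hT : ‖T1 (vp s p)‖ ≤ C1 * g p :=
              h3.trans (mul_le_mul_of_nonneg_left h5 hC1pos)
            have hmm : ‖v s p‖ * ‖T1 (vp s p)‖ ≤ g p * (C1 * g p) :=
              mul_le_mul h4 hT (norm_nonneg _) (hg0 p)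
            linarith
        _ = 2 * C1 * g p ^ 2 := by ring
    have hzero := integral_deriv_eq_zero_of_integrable hd hfint hf'int
    have hpt : ∀ p, (inner ℂ (v s p) (vt s p) : ℂ).re = -(1/2) * f' p := by
      intro p
      rw [hpde s hs p]
      rw [inner_add_right, inner_neg_right, inner_smul_right]
      have him : (inner ℂ (v s p) (T2 (v s p)) : ℂ).im = 0 := by
        have hc : starRingEnd ℂ (inner ℂ (v s p) (T2 (v s p)) : ℂ)
            = (inner ℂ (v s p) (T2 (v s p)) : ℂ) := by
          rw [inner_conj_symm]
          exact hsym2 (v s p) (v s p)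
        exact Complex.conj_eq_iff_im.mp hc
      rw [Complex.add_re, Complex.neg_re, Complex.mul_re, Complex.I_re, Complex.I_im, him,
        hf'def]
      ring
    calc (∫ p : ℝ, (inner ℂ (v s p) (vt s p) : ℂ).re)
        = ∫ p : ℝ, -(1/2) * f' p := by simp_rw [hpt]
      _ = -(1/2) * ∫ p : ℝ, f' p := integral_const_mul _ _
      _ = 0 := by rw [hzero]; ring
  -- time FTC (pointwise in p)
  have hFTCt : ∀ t ∈ Set.Icc (0:ℝ) T, ∀ p : ℝ,
      ‖v t p‖^2 - ‖v 0 p‖^2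
        = ∫ s in (0:ℝ)..t, 2 * (inner ℂ (v s p) (vt s p) : ℂ).re := by
    intro t ht p
    have huIcc : Set.uIcc (0:ℝ) t ⊆ Set.Icc 0 T := by
      rw [Set.uIcc_of_le ht.1]; exact Set.Icc_subset_Icc le_rfl ht.2
    have hderiv : ∀ s ∈ Set.uIcc (0:ℝ) t, HasDerivAt (fun u => ‖v u p‖^2)
        (2 * (inner ℂ (v s p) (vt s p) : ℂ).re) s := by
      intro s hsmem
      have h1 := hdt s (huIcc hsmem) p
      have h3 := HasDerivAt.inner ℂ h1 h1
      have h4 := Complex.reCLM.hasFDerivAt.comp_hasDerivAt s h3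
      have hre : ((inner ℂ (v s p) (vt s p) : ℂ) + (inner ℂ (vt s p) (v s p) : ℂ)).re
          = 2 * (inner ℂ (v s p) (vt s p) : ℂ).re := by
        have hconj : (inner ℂ (vt s p) (v s p) : ℂ)
            = starRingEnd ℂ (inner ℂ (v s p) (vt s p) : ℂ) := (inner_conj_symm _ _).symm
        rw [Complex.add_re, hconj, Complex.conj_re]; ring
      have hfun : ⇑Complex.reCLM ∘ (fun u => (inner ℂ (v u p) (v u p) : ℂ))
          = fun u => ‖v u p‖^2 := by
        funext u
        show ((inner ℂ (v u p) (v u p) : ℂ)).re = ‖v u p‖^2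
        rw [show ((inner ℂ (v u p) (v u p) : ℂ)).re
            = RCLike.re (inner ℂ (v u p) (v u p) : ℂ) from
          (congrFun RCLike.re_eq_complex_re _).symm]
        exact inner_self_eq_norm_sq (v u p)
      rw [hfun] at h4
      rwa [show Complex.reCLM ((inner ℂ (v s p) (vt s p) : ℂ) + (inner ℂ (vt s p) (v s p) : ℂ))
          = 2 * (inner ℂ (v s p) (vt s p) : ℂ).re from by
        rw [Complex.reCLM_apply]; exact hre] at h4
    have hintc : Continuous (fun s => 2 * (inner ℂ (v s p) (vt s p) : ℂ).re) := by
      have hvs : Continuous (fun s => v s p) := hcv.comp (continuous_id.prodMk continuous_const)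
      have hvts : Continuous (fun s => vt s p) := hcvt.comp (continuous_id.prodMk continuous_const)
      exact continuous_const.mul (Complex.continuous_re.comp (hvs.inner hvts))
    have := intervalIntegral.integral_eq_sub_of_hasDerivAt hderiv
      (hintc.intervalIntegrable 0 t)
    linarith [this]
  -- integrability of the squared norms
  have hintv : ∀ t' ∈ Set.Icc (0:ℝ) T, Integrable (fun p => ‖v t' p‖^2) := by
    intro t' ht'
    refine int_of_bound _ 1 ((hcv1 t').norm.pow 2) fun p => ?_
    have h4 := (hbd t' ht' p).1
    have := norm_nonneg (v t' p)
    rw [abs_of_nonneg (by positivity)]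
    nlinarith [hg0 p]
  -- main computation
  intro t ht
  have ht0 : (0:ℝ) ≤ t := ht.1
  have h1 : Integrable (fun p => ‖v t p‖^2) := hintv t ht
  have h0 : Integrable (fun p => ‖v 0 p‖^2) := hintv 0 ⟨le_rfl, hT.le⟩
  have hsub : (∫ p : ℝ, (‖v t p‖^2 - ‖v 0 p‖^2)) = 0 := by
    have hcongr : (fun p : ℝ => ‖v t p‖^2 - ‖v 0 p‖^2)
        = fun p => ∫ s in Set.Ioc (0:ℝ) t, 2 * (inner ℂ (v s p) (vt s p) : ℂ).re := by
      funext p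
      rw [hFTCt t ht p, intervalIntegral.integral_of_le ht0]
    rw [hcongr]
    have hunc : Continuous (fun z : ℝ × ℝ => 2 * (inner ℂ (v z.2 z.1) (vt z.2 z.1) : ℂ).re) := by
      have hv2 : Continuous (fun z : ℝ × ℝ => v z.2 z.1) :=
        hcv.comp (continuous_snd.prodMk continuous_fst)
      have hvt2 : Continuous (fun z : ℝ × ℝ => vt z.2 z.1) :=
        hcvt.comp (continuous_snd.prodMk continuous_fst)
      exact continuous_const.mul (Complex.continuous_re.comp (hv2.inner hvt2))
    have hprodint : Integrable
        (Function.uncurry fun p s => 2 * (inner ℂ (v s p) (vt s p) : ℂ).re)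
        ((volume : Measure ℝ).prod (volume.restrict (Set.Ioc 0 t))) := by
      have hmeas : AEStronglyMeasurable
          (Function.uncurry fun p s => 2 * (inner ℂ (v s p) (vt s p) : ℂ).re)
          ((volume : Measure ℝ).prod (volume.restrict (Set.Ioc 0 t))) :=
        hunc.aestronglyMeasurable
      refine Integrable.mono' (g := fun z : ℝ × ℝ => (2 * g z.1 ^ 2) * 1) ?_ hmeas ?_
      · exact (hgL2.const_mul 2).mul_prod
          ((integrableOn_const measure_Ioc_lt_top.ne) :
            Integrable (fun _ : ℝ => (1:ℝ)) (volume.restrict (Set.Ioc 0 t)))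
      · have hrw : (volume : Measure ℝ).prod (volume.restrict (Set.Ioc 0 t))
            = ((volume : Measure ℝ).prod (volume : Measure ℝ)).restrict
              (Set.univ ×ˢ Set.Ioc 0 t) := by
          rw [← Measure.prod_restrict, Measure.restrict_univ]
        rw [hrw]
        filter_upwards [ae_restrict_mem (MeasurableSet.univ.prod measurableSet_Ioc)]
          with z hz
        have hzs : z.2 ∈ Set.Icc (0:ℝ) T :=
          ⟨hz.2.1.le, hz.2.2.trans ht.2⟩
        have hb1 := (hbd z.2 hzs z.1).1
        have hb2 := (hbd z.2 hzs z.1).2.1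
        have hni := norm_inner_le_norm (𝕜 := ℂ) (v z.2 z.1) (vt z.2 z.1)
        have habs := Complex.abs_re_le_norm (inner ℂ (v z.2 z.1) (vt z.2 z.1) : ℂ)
        have : ‖Function.uncurry (fun p s => 2 * (inner ℂ (v s p) (vt s p) : ℂ).re) z‖
            = |2 * (inner ℂ (v z.2 z.1) (vt z.2 z.1) : ℂ).re| := rfl
        rw [this, abs_mul, abs_two]
        have hg := hg0 z.1
        nlinarith [norm_nonneg (v z.2 z.1), norm_nonneg (vt z.2 z.1)]
    rw [MeasureTheory.integral_integral_swap hprodint]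
    have : ∀ s ∈ Set.Ioc (0:ℝ) t,
        (∫ p : ℝ, 2 * (inner ℂ (v s p) (vt s p) : ℂ).re) = 0 := by
      intro s hsm
      have hsIcc : s ∈ Set.Icc (0:ℝ) T := ⟨hsm.1.le, hsm.2.trans ht.2⟩
      rw [integral_const_mul, hspace s hsIcc, mul_zero]
    calc (∫ s in Set.Ioc (0:ℝ) t, ∫ p : ℝ, 2 * (inner ℂ (v s p) (vt s p) : ℂ).re)
        = ∫ s in Set.Ioc (0:ℝ) t, (0:ℝ) :=
          setIntegral_congr_fun measurableSet_Ioc (fun s hsm => this s hsm)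
      _ = 0 := by simp
  have := integral_sub h1 h0
  rw [hsub] at this
  linarith [this]
end

section
/- The function ξ : ℝ → ℝ defined by ξ(p) = (−3 + 3e^{−1}) p³ + (−5 + 4e^{−1}) p² − p + 1 for p ∈ (−1, 0) and ξ(p) = e^{−|p|} otherwise, is continuously differentiable on all of ℝ, and satisfies ξ(p) = e^{−p} for every p ≥ 0. -/
/-- The piecewise-cubic extension `ξ` of `e^{-p}` used for second-order accuracy
in the Schrödingerisation method. -/
noncomputable def xiFun (p : ℝ) : ℝ :=
  if p ∈ Set.Ioo (-1 : ℝ) 0 then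
    (-3 + 3 * Real.exp (-1)) * p ^ 3 + (-5 + 4 * Real.exp (-1)) * p ^ 2 - p + 1
  else Real.exp (-|p|)

noncomputable def xiDeriv (p : ℝ) : ℝ :=
  if p ∈ Set.Ioo (-1 : ℝ) 0 then
    3 * (-3 + 3 * Real.exp (-1)) * p ^ 2 + 2 * (-5 + 4 * Real.exp (-1)) * p - 1
  else if p < 0 then Real.exp p else -Real.exp (-p)

lemma xi_eq_left : Set.EqOn xiFun (fun p => Real.exp p) (Set.Iic (-1 : ℝ)) := by
  intro p hp
  simp only [Set.mem_Iic] at hp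
  have h1 : p ∉ Set.Ioo (-1 : ℝ) 0 := by
    simp only [Set.mem_Ioo]; intro h; linarith [h.1]
  have h2 : p ≤ 0 := by linarith
  simp [xiFun, h1, abs_of_nonpos h2]

lemma xi_eq_mid : Set.EqOn xiFun
    (fun p => (-3 + 3 * Real.exp (-1)) * p ^ 3 + (-5 + 4 * Real.exp (-1)) * p ^ 2 - p + 1)
    (Set.Icc (-1 : ℝ) 0) := by
  intro p hp
  simp only [Set.mem_Icc] at hp
  by_cases h : p ∈ Set.Ioo (-1 : ℝ) 0
  · simp [xiFun, h]
  · simp only [Set.mem_Ioo, not_and_or, not_lt] at h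
    rcases h with h | h
    · have hp1 : p = -1 := le_antisymm h hp.1
      subst hp1
      have : ¬ ((-1 : ℝ) ∈ Set.Ioo (-1 : ℝ) 0) := by simp
      simp [xiFun, this]
      ring
    · have hp0 : p = 0 := le_antisymm hp.2 h
      subst hp0
      have : ¬ ((0 : ℝ) ∈ Set.Ioo (-1 : ℝ) 0) := by simp
      simp [xiFun, this]

lemma xi_eq_right : Set.EqOn xiFun (fun p => Real.exp (-p)) (Set.Ici (0 : ℝ)) := by
  intro p hp
  simp only [Set.mem_Ici] at hp
  have h1 : p ∉ Set.Ioo (-1 : ℝ) 0 := by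
    simp only [Set.mem_Ioo]; intro h; linarith [h.2]
  simp [xiFun, h1, abs_of_nonneg hp]

lemma xid_eq_left : Set.EqOn xiDeriv (fun p => Real.exp p) (Set.Iic (-1 : ℝ)) := by
  intro p hp
  simp only [Set.mem_Iic] at hp
  have h1 : p ∉ Set.Ioo (-1 : ℝ) 0 := by
    simp only [Set.mem_Ioo]; intro h; linarith [h.1]
  by_cases h2 : p < 0
  · simp [xiDeriv, h1, h2]
  · have hp1 : p = -1 := by linarith
    norm_num [hp1] at h2
lemma xid_eq_mid : Set.EqOn xiDeriv
    (fun p => 3 * (-3 + 3 * Real.exp (-1)) * p ^ 2 + 2 * (-5 + 4 * Real.exp (-1)) * p - 1)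
    (Set.Icc (-1 : ℝ) 0) := by
  intro p hp
  simp only [Set.mem_Icc] at hp
  by_cases h : p ∈ Set.Ioo (-1 : ℝ) 0
  · simp [xiDeriv, h]
  · simp only [Set.mem_Ioo, not_and_or, not_lt] at h
    rcases h with h | h
    · have hp1 : p = -1 := le_antisymm h hp.1
      subst hp1
      have h0 : ¬ ((-1 : ℝ) ∈ Set.Ioo (-1 : ℝ) 0) := by simp
      have h2 : (-1 : ℝ) < 0 := by norm_num
      simp [xiDeriv, h0, h2]
      ring
    · have hp0 : p = 0 := le_antisymm hp.2 h
      subst hp0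
      have h0 : ¬ ((0 : ℝ) ∈ Set.Ioo (-1 : ℝ) 0) := by simp
      have h2 : ¬ ((0 : ℝ) < 0) := by norm_num
      simp [xiDeriv, h0, h2]

lemma xid_eq_right : Set.EqOn xiDeriv (fun p => -Real.exp (-p)) (Set.Ici (0 : ℝ)) := by
  intro p hp
  simp only [Set.mem_Ici] at hp
  have h1 : p ∉ Set.Ioo (-1 : ℝ) 0 := by
    simp only [Set.mem_Ioo]; intro h; linarith [h.2]
  have h2 : ¬ (p < 0) := not_lt.2 hp
  simp [xiDeriv, h1, h2]

lemma union_cover : Set.Iic (-1 : ℝ) ∪ Set.Icc (-1 : ℝ) 0 ∪ Set.Ici (0 : ℝ) = Set.univ := by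
  ext x
  simp only [Set.mem_union, Set.mem_Iic, Set.mem_Icc, Set.mem_Ici, Set.mem_univ, iff_true]
  by_cases h1 : x ≤ -1
  · exact Or.inl (Or.inl h1)
  · by_cases h2 : x ≤ 0
    · exact Or.inl (Or.inr ⟨le_of_not_ge h1, h2⟩)
    · exact Or.inr (le_of_not_ge h2)

lemma hda_expneg (x : ℝ) : HasDerivAt (fun p => Real.exp (-p)) (-Real.exp (-x)) x := by
  simpa [Function.comp_def] using (Real.hasDerivAt_exp (-x)).comp x (hasDerivAt_neg x)

lemma hda_cubic (a b : ℝ) (x : ℝ) :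
    HasDerivAt (fun p => a * p ^ 3 + b * p ^ 2 - p + 1)
      (3 * a * x ^ 2 + 2 * b * x - 1) x := by
  have h := ((((hasDerivAt_pow 3 x).const_mul a).add
      ((hasDerivAt_pow 2 x).const_mul b)).sub (hasDerivAt_id x)).add_const 1
  refine h.congr_deriv ?_
  push_cast
  ring

lemma key (x : ℝ) : HasDerivAt xiFun (xiDeriv x) x := by
  have h1 : HasDerivWithinAt xiFun (xiDeriv x) (Set.Iic (-1)) x := by
    by_cases hx : x ∈ Set.Iic (-1 : ℝ)
    · exact ((Real.hasDerivAt_exp x).hasDerivWithinAt.congr xi_eq_left (xi_eq_left hx)).congr_deriv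
        (xid_eq_left hx).symm
    · exact HasFDerivWithinAt.of_notMem_closure (by rwa [closure_Iic])
  have h2 : HasDerivWithinAt xiFun (xiDeriv x) (Set.Icc (-1) 0) x := by
    by_cases hx : x ∈ Set.Icc (-1 : ℝ) 0
    · exact (((hda_cubic _ _ x).hasDerivWithinAt.congr xi_eq_mid (xi_eq_mid hx))).congr_deriv
        (xid_eq_mid hx).symm
    · exact HasFDerivWithinAt.of_notMem_closure (by rwa [IsClosed.closure_eq isClosed_Icc])
  have h3 : HasDerivWithinAt xiFun (xiDeriv x) (Set.Ici 0) x := by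
    by_cases hx : x ∈ Set.Ici (0 : ℝ)
    · exact ((hda_expneg x).hasDerivWithinAt.congr xi_eq_right (xi_eq_right hx)).congr_deriv
        (xid_eq_right hx).symm
    · exact HasFDerivWithinAt.of_notMem_closure (by rwa [closure_Ici])
  have := (h1.union h2).union h3
  rwa [union_cover, hasDerivWithinAt_univ] at this

lemma xid_cont : Continuous xiDeriv := by
  rw [continuous_iff_continuousAt]
  intro x
  have h1 : ContinuousWithinAt xiDeriv (Set.Iic (-1)) x := by
    by_cases hx : x ∈ Set.Iic (-1 : ℝ)
    · exact (Real.continuous_exp.continuousWithinAt).congr xid_eq_left (xid_eq_left hx)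
    · exact continuousWithinAt_of_notMem_closure (by rwa [closure_Iic])
  have h2 : ContinuousWithinAt xiDeriv (Set.Icc (-1) 0) x := by
    by_cases hx : x ∈ Set.Icc (-1 : ℝ) 0
    · exact (Continuous.continuousWithinAt (by continuity)).congr xid_eq_mid (xid_eq_mid hx)
    · exact continuousWithinAt_of_notMem_closure (by rwa [IsClosed.closure_eq isClosed_Icc])
  have h3 : ContinuousWithinAt xiDeriv (Set.Ici 0) x := by
    by_cases hx : x ∈ Set.Ici (0 : ℝ)
    · exact (Continuous.continuousWithinAt (by continuity)).congr xid_eq_right (xid_eq_right hx)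
    · exact continuousWithinAt_of_notMem_closure (by rwa [closure_Ici])
  have := (h1.union h2).union h3
  rwa [union_cover, continuousWithinAt_univ] at this

/-- `ξ` is continuously differentiable on all of `ℝ` and agrees with `e^{-p}`
for `p ≥ 0`. -/
theorem stmt_6 :
    ContDiff ℝ 1 xiFun ∧ ∀ p : ℝ, 0 ≤ p → xiFun p = Real.exp (-p) := by
  constructor
  · rw [contDiff_one_iff_deriv]
    refine ⟨fun x => (key x).differentiableAt, ?_⟩
    have : deriv xiFun = xiDeriv := funext fun x => (key x).deriv
    rw [this]
    exact xid_cont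
  · intro p hp
    exact xi_eq_right hp
end

section
/- Let m ≥ 1 and M = 2^m. Identify indices j ∈ {0, 1, …, M−1} with their binary expansions in {0,1}^m (most significant bit first). Then the M×M subdiagonal shift matrix S⁺ := Σ_{j=1}^{M−1} |j⟩⟨j−1| satisfies S⁺ = Σ_{j=1}^{m} I_{2^{m−j}} ⊗ σ_{10} ⊗ σ_{01}^{⊗(j−1)}, where σ_{10} = |1⟩⟨0| and σ_{01} = |0⟩⟨1| are the 2×2 matrix units, I_{2^{m−j}} is the identity of size 2^{m−j}, and σ_{01}^{⊗0} is understood as the empty Kronecker factor. -/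
open Matrix
open scoped Kronecker

/-- The 2×2 matrix unit `σ₀₁ = |0⟩⟨1|`. -/
def sigma01 : Matrix (Fin 2) (Fin 2) ℂ := !![0, 1; 0, 0]

/-- The 2×2 matrix unit `σ₁₀ = |1⟩⟨0|`. -/
def sigma10 : Matrix (Fin 2) (Fin 2) ℂ := !![0, 0; 1, 0]

/-- `k`-fold Kronecker power of a 2×2 matrix, as a `2^k × 2^k` matrix, with the
leftmost factor most significant; `A^{⊗0}` is the empty Kronecker factor `(1)`. -/
def kronPow (A : Matrix (Fin 2) (Fin 2) ℂ) : (k : ℕ) → Matrix (Fin (2 ^ k)) (Fin (2 ^ k)) ℂ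
  | 0 => 1
  | k + 1 =>
    Matrix.reindex (finProdFinEquiv.trans (finCongr (by rw [pow_succ, Nat.mul_comm] : 2 * 2 ^ k = 2 ^ (k + 1))))
      (finProdFinEquiv.trans (finCongr (by rw [pow_succ, Nat.mul_comm] : 2 * 2 ^ k = 2 ^ (k + 1)))) (A ⊗ₖ kronPow A k)

/-- The identification of `Fin (2^m)` with binary strings (most significant bit first),
split as (top `m-j-1` bits, next bit, low `j` bits). -/
def binSplit (m : ℕ) (j : Fin m) :
    Fin (2 ^ (m - ((j : ℕ) + 1))) × (Fin 2 × Fin (2 ^ (j : ℕ))) ≃ Fin (2 ^ m) :=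
  (Equiv.prodCongr (Equiv.refl _) finProdFinEquiv).trans <|
    finProdFinEquiv.trans <| finCongr <| by
      have hj : (j : ℕ) + 1 ≤ m := j.isLt
      calc 2 ^ (m - ((j : ℕ) + 1)) * (2 * 2 ^ (j : ℕ))
          = 2 ^ (m - ((j : ℕ) + 1)) * 2 ^ ((j : ℕ) + 1) := by ring
        _ = 2 ^ (m - ((j : ℕ) + 1) + ((j : ℕ) + 1)) := (pow_add 2 _ _).symm
        _ = 2 ^ m := by rw [Nat.sub_add_cancel hj]

lemma sigma01_apply' (a b : Fin 2) :
    sigma01 a b = if (a : ℕ) = 0 ∧ (b : ℕ) = 1 then 1 else 0 := by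
  fin_cases a <;> fin_cases b <;> simp [sigma01]

lemma sigma10_apply' (a b : Fin 2) :
    sigma10 a b = if (a : ℕ) = 1 ∧ (b : ℕ) = 0 then 1 else 0 := by
  fin_cases a <;> fin_cases b <;> simp [sigma10]

lemma ite_zero_mul_ite_zero' (a b : ℂ) (P Q : Prop) [Decidable P] [Decidable Q] :
    (if P then a else 0) * (if Q then b else 0) = if P ∧ Q then a * b else 0 := by
  split_ifs with h1 h2 h2 <;> simp_all

lemma kronPow_sigma01_apply : ∀ (k : ℕ) (x y : Fin (2 ^ k)),
    kronPow sigma01 k x y = if (x : ℕ) = 0 ∧ (y : ℕ) + 1 = 2 ^ k then 1 else 0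
  | 0, x, y => by
    have hx : (x : ℕ) = 0 := by omega
    have hy : (y : ℕ) = 0 := by omega
    have : x = y := by omega
    simp [kronPow, this, Matrix.one_apply, hx, hy]
  | k + 1, x, y => by
    rw [kronPow, Matrix.reindex_apply, Matrix.submatrix_apply]
    set e := (finProdFinEquiv.trans (finCongr (by rw [pow_succ, Nat.mul_comm] : 2 * 2 ^ k = 2 ^ (k + 1)))) with he
    set p := e.symm x with hp
    set q := e.symm y with hq
    have hx : (x : ℕ) = (p.2 : ℕ) + 2 ^ k * (p.1 : ℕ) := by
      conv_lhs => rw [show x = e p by rw [hp, Equiv.apply_symm_apply]]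
      rfl
    have hy : (y : ℕ) = (q.2 : ℕ) + 2 ^ k * (q.1 : ℕ) := by
      conv_lhs => rw [show y = e q by rw [hq, Equiv.apply_symm_apply]]
      rfl
    rw [Matrix.kroneckerMap_apply, sigma01_apply', kronPow_sigma01_apply k]
    have hp2 : (p.2 : ℕ) < 2 ^ k := p.2.isLt
    have hq2 : (q.2 : ℕ) < 2 ^ k := q.2.isLt
    have hp1 : (p.1 : ℕ) < 2 := p.1.isLt
    have hq1 : (q.1 : ℕ) < 2 := q.1.isLt
    have hpow : (2 : ℕ) ^ (k + 1) = 2 * 2 ^ k := by ring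
    rw [ite_zero_mul_ite_zero', one_mul]
    refine if_congr ?_ rfl rfl
    rcases (by omega : (p.1 : ℕ) = 0 ∨ (p.1 : ℕ) = 1) with h1 | h1 <;>
      rcases (by omega : (q.1 : ℕ) = 0 ∨ (q.1 : ℕ) = 1) with h2 | h2 <;>
      rw [h1] at hx <;> rw [h2] at hy <;> rw [h1, h2] <;> omega

lemma divmod_key (n c t : ℕ) (hn : 0 < n) (hc : c < n) :
    (c + n * t) % n = c ∧ (c + n * t) / n = t := by
  constructor
  · rw [Nat.add_mul_mod_self_left, Nat.mod_eq_of_lt hc]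
  · rw [Nat.add_mul_div_left _ _ hn, Nat.div_eq_of_lt hc, Nat.zero_add]

lemma summand_apply (m : ℕ) (j : Fin m) (i k : Fin (2 ^ m)) :
    (Matrix.reindex (binSplit m j) (binSplit m j)
        ((1 : Matrix (Fin (2 ^ (m - ((j : ℕ) + 1)))) (Fin (2 ^ (m - ((j : ℕ) + 1)))) ℂ)
          ⊗ₖ (sigma10 ⊗ₖ kronPow sigma01 (j : ℕ)))) i k =
      if (i : ℕ) = (k : ℕ) + 1 ∧ (i : ℕ) % 2 ^ ((j : ℕ) + 1) = 2 ^ (j : ℕ) then 1 else 0 := by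
  rw [Matrix.reindex_apply, Matrix.submatrix_apply]
  set p := (binSplit m j).symm i with hpdef
  set q := (binSplit m j).symm k with hqdef
  have hi : (i : ℕ) = (p.2.2 : ℕ) + 2 ^ (j : ℕ) * (p.2.1 : ℕ) + 2 ^ ((j : ℕ) + 1) * (p.1 : ℕ) := by
    conv_lhs => rw [show i = binSplit m j p by rw [hpdef, Equiv.apply_symm_apply]]
    show (p.2.2 : ℕ) + 2 ^ (j : ℕ) * (p.2.1 : ℕ) + 2 * 2 ^ (j : ℕ) * (p.1 : ℕ) = _
    ring
  have hk : (k : ℕ) = (q.2.2 : ℕ) + 2 ^ (j : ℕ) * (q.2.1 : ℕ) + 2 ^ ((j : ℕ) + 1) * (q.1 : ℕ) := by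
    conv_lhs => rw [show k = binSplit m j q by rw [hqdef, Equiv.apply_symm_apply]]
    show (q.2.2 : ℕ) + 2 ^ (j : ℕ) * (q.2.1 : ℕ) + 2 * 2 ^ (j : ℕ) * (q.1 : ℕ) = _
    ring
  have hP : 0 < 2 ^ (j : ℕ) := Nat.pow_pos (by norm_num)
  have hQ : (2 : ℕ) ^ ((j : ℕ) + 1) = 2 * 2 ^ (j : ℕ) := by ring
  have hQ0 : 0 < (2 : ℕ) ^ ((j : ℕ) + 1) := by omega
  have hb1 : (p.2.1 : ℕ) < 2 := p.2.1.isLt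
  have hb2 : (q.2.1 : ℕ) < 2 := q.2.1.isLt
  have hl1 : (p.2.2 : ℕ) < 2 ^ (j : ℕ) := p.2.2.isLt
  have hl2 : (q.2.2 : ℕ) < 2 ^ (j : ℕ) := q.2.2.isLt
  rw [Matrix.kroneckerMap_apply, Matrix.kroneckerMap_apply, Matrix.one_apply,
    sigma10_apply', kronPow_sigma01_apply]
  rw [ite_zero_mul_ite_zero', ite_zero_mul_ite_zero', one_mul, one_mul]
  simp only [Fin.ext_iff]
  refine if_congr ?_ rfl rfl
  constructor
  · rintro ⟨h1, ⟨hpb, hqb⟩, hpl, hql⟩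
    rw [h1, hpb, hpl] at hi
    rw [hqb] at hk
    have hm := (divmod_key (2 ^ ((j : ℕ) + 1)) (0 + 2 ^ (j : ℕ) * 1) q.1 hQ0 (by omega)).1
    rw [← hi] at hm
    exact ⟨by omega, by omega⟩
  · rintro ⟨hik, him⟩
    rcases (by omega : (p.2.1 : ℕ) = 0 ∨ (p.2.1 : ℕ) = 1) with hb | hb <;> rw [hb] at hi
    · exfalso
      have hm := (divmod_key (2 ^ ((j : ℕ) + 1)) ((p.2.2 : ℕ) + 2 ^ (j : ℕ) * 0) p.1 hQ0 (by omega)).1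
      rw [← hi] at hm
      omega
    · have hm := divmod_key (2 ^ ((j : ℕ) + 1)) ((p.2.2 : ℕ) + 2 ^ (j : ℕ) * 1) p.1 hQ0 (by omega)
      rw [← hi] at hm
      have hp22 : (p.2.2 : ℕ) = 0 := by omega
      have hk' : (2 ^ (j : ℕ) - 1) + 2 ^ ((j : ℕ) + 1) * (p.1 : ℕ) = (k : ℕ) := by omega
      have hman := divmod_key (2 ^ ((j : ℕ) + 1)) (2 ^ (j : ℕ) - 1) p.1 hQ0 (by omega)
      rw [hk'] at hman
      rcases (by omega : (q.2.1 : ℕ) = 0 ∨ (q.2.1 : ℕ) = 1) with hc | hc <;> rw [hc] at hk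
      · have hqm := divmod_key (2 ^ ((j : ℕ) + 1)) ((q.2.2 : ℕ) + 2 ^ (j : ℕ) * 0) q.1 hQ0 (by omega)
        rw [← hk] at hqm
        exact ⟨by omega, ⟨hb, hc⟩, hp22, by omega⟩
      · exfalso
        have hqm := divmod_key (2 ^ ((j : ℕ) + 1)) ((q.2.2 : ℕ) + 2 ^ (j : ℕ) * 1) q.1 hQ0 (by omega)
        rw [← hk] at hqm
        omega

lemma exists_bit : ∀ i : ℕ, 0 < i → ∃ j t, i = 2 ^ j + 2 ^ (j + 1) * t := by
  intro i
  induction i using Nat.strong_induction_on with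
  | _ i ih =>
    intro h
    rcases Nat.even_or_odd i with ⟨c, hc⟩ | ⟨c, hc⟩
    · have hc2 : 0 < c := by omega
      obtain ⟨j, t, hjt⟩ := ih c (by omega) hc2
      refine ⟨j + 1, t, ?_⟩
      rw [hc, hjt]; ring
    · exact ⟨0, c, by rw [pow_zero, pow_one]; omega⟩

lemma mod_bit_uniq (n : ℕ) : ∀ a b : ℕ, n % 2 ^ (a + 1) = 2 ^ a → n % 2 ^ (b + 1) = 2 ^ b → a = b := by
  have H : ∀ a b : ℕ, a < b → n % 2 ^ (a + 1) = 2 ^ a → n % 2 ^ (b + 1) = 2 ^ b → False := by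
    intro a b hab ha hb
    have hdvd : (2 ^ (a + 1) : ℕ) ∣ 2 ^ (b + 1) := pow_dvd_pow 2 (by omega)
    have h1 : n % 2 ^ (a + 1) = (n % 2 ^ (b + 1)) % 2 ^ (a + 1) := (Nat.mod_mod_of_dvd n hdvd).symm
    rw [hb, ha] at h1
    obtain ⟨c, hcc⟩ := pow_dvd_pow 2 (show a + 1 ≤ b by omega)
    rw [hcc, Nat.mul_mod_right] at h1
    have : 0 < (2 : ℕ) ^ a := Nat.pow_pos (by norm_num)
    omega
  intro a b ha hb
  rcases lt_trichotomy a b with h | h | h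
  · exact (H a b h ha hb).elim
  · exact h
  · exact (H b a h hb ha).elim

/-- **Tensor-product decomposition of the shift operator.**
For `M = 2^m`, the subdiagonal shift `S⁺ = Σ_{j=1}^{M-1} |j⟩⟨j-1|` equals
`Σ_{j=1}^{m} I_{2^{m-j}} ⊗ σ₁₀ ⊗ σ₀₁^{⊗(j-1)}` under the identification of indices
with their binary expansions, most significant bit first.  (Below the summation
index `j : Fin m` corresponds to the paper's `j + 1 ∈ {1, …, m}`.) -/
theorem stmt_7 (m : ℕ) (hm : 1 ≤ m) :
    (Matrix.of fun i j : Fin (2 ^ m) => if (i : ℕ) = (j : ℕ) + 1 then (1 : ℂ) else 0) =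
    ∑ j : Fin m,
      Matrix.reindex (binSplit m j) (binSplit m j)
        ((1 : Matrix (Fin (2 ^ (m - ((j : ℕ) + 1)))) (Fin (2 ^ (m - ((j : ℕ) + 1)))) ℂ)
          ⊗ₖ (sigma10 ⊗ₖ kronPow sigma01 (j : ℕ))) := by
  ext i k
  rw [Matrix.sum_apply, Matrix.of_apply]
  simp only [summand_apply]
  by_cases h : (i : ℕ) = (k : ℕ) + 1
  · rw [if_pos h]
    obtain ⟨j0, t, hjt⟩ := exists_bit (i : ℕ) (by omega)
    have hile : (2 : ℕ) ^ j0 ≤ (i : ℕ) := by omega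
    have hilt : (i : ℕ) < 2 ^ m := i.isLt
    have hj0m : j0 < m := by
      by_contra hge
      have h2 : (2 : ℕ) ^ m ≤ 2 ^ j0 := Nat.pow_le_pow_right (by norm_num) (by omega)
      exact absurd (lt_of_lt_of_le hilt (h2.trans hile)) (lt_irrefl _)
    have hmod : (i : ℕ) % 2 ^ (j0 + 1) = 2 ^ j0 := by
      have h1 : (2 : ℕ) ^ j0 < 2 ^ (j0 + 1) := Nat.pow_lt_pow_succ (by norm_num)
      rw [hjt, Nat.add_mul_mod_self_left, Nat.mod_eq_of_lt h1]
    rw [Finset.sum_eq_single (⟨j0, hj0m⟩ : Fin m)]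
    · exact (if_pos ⟨h, hmod⟩).symm
    · intro b _ hb
      rw [if_neg]
      rintro ⟨-, hbmod⟩
      exact hb (Fin.ext (mod_bit_uniq (i : ℕ) (b : ℕ) j0 hbmod hmod))
    · intro hmem; exact absurd (Finset.mem_univ _) hmem
  · rw [if_neg h]
    symm
    apply Finset.sum_eq_zero
    intro j _
    rw [if_neg]
    rintro ⟨h1, -⟩
    exact h h1
end

section
/- Let b, τ ∈ ℝ and let C(b, τ) be the real 4×4 matrix with rows [0, 0, 2b cos τ, 2b sin τ], [0, 0, −2b cos τ, −2b sin τ], [−b cos τ, b cos τ, 0, 0], [−b sin τ, b sin τ, 0, 0]. Then the symmetric part (C(b,τ) + C(b,τ)ᵀ)/2 has eigenvalues |b|/√2, 0, 0, −|b|/√2; in particular its largest eigenvalue equals |b|/√2. -/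
open Matrix Polynomial

lemma mem_spec_iff_aux (A : Matrix (Fin 4) (Fin 4) ℝ) (μ : ℝ) :
    μ ∈ spectrum ℝ A ↔ A.charpoly.eval μ = 0 := by
  rw [spectrum.mem_iff, Matrix.charpoly, eval_det, matPolyEquiv_charmatrix]
  simp only [eval_sub, eval_X, eval_C]
  rw [isUnit_iff_isUnit_det, isUnit_iff_ne_zero, not_ne_iff,
    Matrix.algebraMap_eq_diagonal, Matrix.scalar_apply]
  rfl

/-- **Eigenvalues of the symmetric part of the surface-hopping coupling matrix.**
For the 4×4 coupling matrix `C(b,τ)` of the Schrödingerised surface hopping model,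
the symmetric part `(C + Cᵀ)/2` has characteristic polynomial `X²(X² - b²/2)`,
i.e. eigenvalues `|b|/√2, 0, 0, -|b|/√2`; in particular its largest eigenvalue is
`|b|/√2`. -/
theorem stmt_15 (b τ : ℝ) :
    let C : Matrix (Fin 4) (Fin 4) ℝ :=
      !![0, 0, 2 * b * Real.cos τ, 2 * b * Real.sin τ;
         0, 0, -(2 * b * Real.cos τ), -(2 * b * Real.sin τ);
         -(b * Real.cos τ), b * Real.cos τ, 0, 0;
         -(b * Real.sin τ), b * Real.sin τ, 0, 0]
    let M : Matrix (Fin 4) (Fin 4) ℝ := (2 : ℝ)⁻¹ • (C + Cᵀ)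
    M.charpoly = X ^ 2 * (X ^ 2 - Polynomial.C (b ^ 2 / 2)) ∧
    spectrum ℝ M = {|b| / Real.sqrt 2, 0, -(|b| / Real.sqrt 2)} ∧
    IsGreatest (spectrum ℝ M) (|b| / Real.sqrt 2) := by
  intro C M
  have hcp : M.charpoly = X ^ 2 * (X ^ 2 - Polynomial.C (b ^ 2 / 2)) := by
    have hM : M = !![0, 0, b * Real.cos τ / 2, b * Real.sin τ / 2;
        0, 0, -(b * Real.cos τ / 2), -(b * Real.sin τ / 2);
        b * Real.cos τ / 2, -(b * Real.cos τ / 2), 0, 0;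
        b * Real.sin τ / 2, -(b * Real.sin τ / 2), 0, 0] := by
      show (2 : ℝ)⁻¹ • (C + Cᵀ) = _
      ext i j
      fin_cases i <;> fin_cases j <;>
        simp [C, Matrix.add_apply, Matrix.smul_apply, Matrix.transpose_apply,
          Matrix.vecHead, Matrix.vecTail, Function.comp] <;> ring
    rw [Matrix.charpoly, hM]
    simp [charmatrix_apply, diagonal_apply,
      Matrix.det_succ_row_zero, Fin.sum_univ_succ, Fin.succAbove]
    ring_nf
    simp only [← Polynomial.C_pow]
    rw [show (b * Real.cos τ * (1 / 2)) ^ 2 = b ^ 2 * (1 / 4) - (b * Real.sin τ * (1 / 2)) ^ 2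
          from by nlinarith [Real.sin_sq_add_cos_sq τ],
       show b ^ 2 * (1 / 2) = b ^ 2 * (1 / 4) + b ^ 2 * (1 / 4) from by ring]
    simp only [Polynomial.C_sub, Polynomial.C_add]
    ring
  have hs : (|b| / Real.sqrt 2) ^ 2 = b ^ 2 / 2 := by
    rw [div_pow, sq_abs, Real.sq_sqrt (by norm_num : (0:ℝ) ≤ 2)]
  have hs0 : 0 ≤ |b| / Real.sqrt 2 := by positivity
  have hspec : ∀ μ : ℝ, μ ∈ spectrum ℝ M ↔ μ = 0 ∨ μ ^ 2 = b ^ 2 / 2 := by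
    intro μ
    rw [mem_spec_iff_aux, hcp]
    simp only [eval_mul, eval_pow, eval_X, eval_sub, eval_C, mul_eq_zero,
      pow_eq_zero_iff (by norm_num : 2 ≠ 0), sub_eq_zero]
  have hsetval : spectrum ℝ M = {|b| / Real.sqrt 2, 0, -(|b| / Real.sqrt 2)} := by
    ext μ
    rw [hspec]
    simp only [Set.mem_insert_iff, Set.mem_singleton_iff]
    constructor
    · rintro (rfl | h)
      · exact Or.inr (Or.inl rfl)
      · rw [← hs, sq_eq_sq_iff_eq_or_eq_neg] at h
        exact h.elim Or.inl (fun h => Or.inr (Or.inr h))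
    · rintro (rfl | rfl | rfl)
      · exact Or.inr hs
      · exact Or.inl rfl
      · exact Or.inr (by rw [neg_pow, ← hs]; ring)
  refine ⟨hcp, hsetval, ?_, ?_⟩
  · rw [hsetval]; left; rfl
  · intro μ hμ
    rw [hsetval] at hμ
    rcases hμ with rfl | rfl | rfl
    · exact le_refl _
    · exact hs0
    · linarith
end
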